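/- arXiv:math/0211241 — 7 statements merged into one kernel-verified Lean document; each statement's English description precedes it below -/
import Mathlib

section
/- Let E be a row-finite directed graph with no sinks that satisfies condition (M). Then every circuit in E is terminal, i.e., no circuit of E admits an exit. -/
namespace CKGraph

variable {V E : Type*}

/-- One-step relation: there is an edge from `v` to `w`. -/
def Step (o t : E → V) (v w : V) : Prop := ∃ e, o e = v ∧ t e = w

/-- `Reach o t v w` means `v ≥ w`: there is a (possibly trivial) directed path
from `v` to `w`. -/
def Reach (o t : E → V) (v w : V) : Prop := Relation.ReflTransGen (Step o t) v w

/-- A finite path: consecutive edges are composable. -/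
def IsPath (o t : E → V) (p : List E) : Prop := List.Chain' (fun e f => t e = o f) p

/-- An infinite path. -/
def IsInfPath (o t : E → V) (p : ℕ → E) : Prop := ∀ n, t (p n) = o (p (n + 1))

/-- Tail-equivalence of infinite paths: they eventually share the same tail. -/
def InfEquiv (p q : ℕ → E) : Prop := ∃ j k : ℕ, ∀ r : ℕ, p (j + r) = q (k + r)

/-- The set of vertices occurring in a finite path. -/
def FinPathVerts (o t : E → V) (p : List E) : Set V := {v | ∃ e ∈ p, o e = v ∨ t e = v}

/-- The set of vertices occurring in an infinite path. -/
def InfPathVerts (o t : E → V) (p : ℕ → E) : Set V := {v | ∃ n, o (p n) = v}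

/-- Every vertex emits at most finitely many edges. -/
def RowFinite (o : E → V) : Prop := ∀ v : V, {e : E | o e = v}.Finite

/-- Every vertex emits at least one edge. -/
def NoSinks (o : E → V) : Prop := ∀ v : V, ∃ e : E, o e = v

/-- Condition (M): for every vertex `v` and every infinite path `l`, only finitely
many infinite paths begin at `v` and are equivalent to `l`. -/
def CondM (o t : E → V) : Prop :=
  ∀ (v : V) (l : ℕ → E), IsInfPath o t l →
    {p : ℕ → E | IsInfPath o t p ∧ o (p 0) = v ∧ InfEquiv p l}.Finite

/-- A circuit: a finite path of positive length whose origin and terminus agree. -/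
def IsCircuit (o t : E → V) (p : List E) : Prop :=
  IsPath o t p ∧ ∃ h : p ≠ [], o (p.head h) = t (p.getLast h)

/-- An exit of a circuit: an edge not on the circuit whose origin is a vertex of
the circuit. -/
def IsExit (o t : E → V) (p : List E) (e : E) : Prop :=
  e ∉ p ∧ o e ∈ FinPathVerts o t p

/-- A terminal circuit: a circuit with no exit. -/
def TerminalCircuit (o t : E → V) (p : List E) : Prop :=
  IsCircuit o t p ∧ ∀ e : E, ¬ IsExit o t p e

/-- A transitory circuit: a circuit with an exit, none of whose exits gets back
to the circuit. -/
def TransitoryCircuit (o t : E → V) (p : List E) : Prop :=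
  IsCircuit o t p ∧ (∃ e : E, IsExit o t p e) ∧
    ∀ e : E, IsExit o t p e → ∀ w ∈ FinPathVerts o t p, ¬ Reach o t (t e) w

/-- The set of vertices of the infinite path `l` that emit multiple edges
returning to `l`; its cardinality is `N_l`. -/
def ReturnVerts (o t : E → V) (l : ℕ → E) : Set V :=
  {v | v ∈ InfPathVerts o t l ∧ ∃ e f : E, e ≠ f ∧ o e = v ∧ o f = v ∧
    (∃ w ∈ InfPathVerts o t l, Reach o t (t e) w) ∧
    (∃ w ∈ InfPathVerts o t l, Reach o t (t f) w)}

/-- A maximal tail. -/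
def MaximalTail (o t : E → V) (γ : Set V) : Prop :=
  γ.Nonempty ∧
  (∀ v₁ ∈ γ, ∀ v₂ ∈ γ, ∃ z ∈ γ, Reach o t v₁ z ∧ Reach o t v₂ z) ∧
  (∀ v ∈ γ, ∃ e : E, o e = v ∧ t e ∈ γ) ∧
  (∀ v w : V, Reach o t v w → w ∈ γ → v ∈ γ)

/-- The edge set of the induced subgraph `Graph(γ)`. -/
def edgesIn (o t : E → V) (γ : Set V) : Set E := {e | o e ∈ γ ∧ t e ∈ γ}

/-- One-step relation in the subgraph with edge set `S`. -/
def StepIn (o t : E → V) (S : Set E) (v w : V) : Prop := ∃ e ∈ S, o e = v ∧ t e = w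

/-- Reachability inside the subgraph with edge set `S`. -/
def ReachIn (o t : E → V) (S : Set E) (v w : V) : Prop :=
  Relation.ReflTransGen (StepIn o t S) v w

/-- `H` is saturated in the subgraph with vertex set `V0` and edge set `E0`:
every non-singular vertex of the subgraph all of whose successors lie in `H`
belongs to `H`. -/
def SaturatedIn (o t : E → V) (V0 : Set V) (E0 : Set E) (H : Set V) : Prop :=
  ∀ v ∈ V0, (∃ e ∈ E0, o e = v) → {e ∈ E0 | o e = v}.Finite →
    (∀ e ∈ E0, o e = v → t e ∈ H) → v ∈ H

/-- The saturation of `S` in the subgraph `(V0, E0)`: the smallest subset of `V0`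
containing `S` which is saturated in the subgraph. -/
def saturationIn (o t : E → V) (V0 : Set V) (E0 : Set E) (S : Set V) : Set V :=
  ⋂₀ {H : Set V | S ⊆ H ∧ H ⊆ V0 ∧ SaturatedIn o t V0 E0 H}

/-- A hereditary subset of vertices. -/
def Hereditary (o t : E → V) (H : Set V) : Prop :=
  ∀ v ∈ H, ∀ w : V, Reach o t v w → w ∈ H

/-- A singular vertex: a sink or an infinite emitter. -/
def Singular (o : E → V) (v : V) : Prop :=
  (¬ ∃ e : E, o e = v) ∨ {e : E | o e = v}.Infinite

/-- A saturated subset of vertices: every non-singular vertex all of whose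
successors lie in `H` belongs to `H`. -/
def Saturated (o t : E → V) (H : Set V) : Prop :=
  ∀ v : V, ¬ Singular o v → (∀ e : E, o e = v → t e ∈ H) → v ∈ H

/-- The saturation of `S`: the smallest saturated set containing `S`. -/
def saturation (o t : E → V) (S : Set V) : Set V :=
  ⋂₀ {H : Set V | S ⊆ H ∧ Saturated o t H}


/-!
Suppose a circuit `p` has an exit `e`. Since there are no sinks, `e` begins an infinite path `l`. For every
`n`, going `n` times around `p` from `o e` and then following `l` gives an infinite path that
starts at `o e` and is tail-equivalent to `l`. These paths are pairwise distinct: at time `n·|p|`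
one of them takes `e` and the others are still on `p`, which `e` does not belong to. So
condition (M) fails at `o e`.
-/

open Function

section

variable {o t : E → V}

lemma NoSinks.exists_isInfPath_head (hns : NoSinks o) (e : E) :
    ∃ l : ℕ → E, IsInfPath o t l ∧ l 0 = e := by
  choose next hnext using hns
  refine ⟨fun n => (next ∘ t)^[n] e, fun n => ?_, rfl⟩
  show t ((next ∘ t)^[n] e) = o ((next ∘ t)^[n + 1] e)
  rw [iterate_succ_apply', comp_apply, hnext]

lemma IsCircuit.length_pos {p : List E} (hp : IsCircuit o t p) : 0 < p.length :=
  List.length_pos_iff.mpr hp.2.1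

lemma IsCircuit.terminus_getElem {p : List E} (hp : IsCircuit o t p) (i : ℕ)
    (hi : i < p.length) :
    t p[i] = o (p[(i + 1) % p.length]'(Nat.mod_lt _ hp.length_pos)) := by
  obtain ⟨hpath, hne, hwrap⟩ := hp
  rcases Nat.lt_or_ge (i + 1) p.length with hlt | hge
  · simp only [Nat.mod_eq_of_lt hlt]
    exact List.isChain_iff_getElem.mp hpath i hlt
  · have hlast : i = p.length - 1 := by omega
    subst hlast
    simp only [Nat.sub_add_cancel (List.length_pos_iff.mpr hne), Nat.mod_self]
    rw [← List.getLast_eq_getElem hne, ← List.head_eq_getElem hne, hwrap]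

lemma IsCircuit.exists_periodic_isInfPath {p : List E} (hp : IsCircuit o t p) {v : V}
    (hv : v ∈ FinPathVerts o t p) :
    ∃ c : ℕ → E, IsInfPath o t c ∧ o (c 0) = v ∧ Periodic c p.length ∧ ∀ m, c m ∈ p := by
  set cyc : ℕ → E := fun m => p[m % p.length]'(Nat.mod_lt _ hp.length_pos)
  have hcyc : IsInfPath o t cyc := fun m => by
    simp only [cyc, hp.terminus_getElem, Nat.mod_add_mod]
  have hstart : ∃ k, o (cyc k) = v := by
    obtain ⟨g, hg, hgv⟩ := hv
    obtain ⟨i, hi, rfl⟩ := List.getElem_of_mem hg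
    have hcyc_i : cyc i = p[i] := by simp only [cyc, Nat.mod_eq_of_lt hi]
    rcases hgv with hov | htv
    · exact ⟨i, hcyc_i ▸ hov⟩
    · exact ⟨i + 1, hcyc i ▸ hcyc_i ▸ htv⟩
  obtain ⟨k, hk⟩ := hstart
  refine ⟨fun m => cyc (m + k), fun m => ?_, by simpa using hk, fun m => ?_,
    fun m => List.getElem_mem _⟩
  · simpa only [Nat.add_right_comm] using hcyc (m + k)
  · simp only [cyc, Nat.add_right_comm m p.length k, Nat.add_mod_right]

def splice (a : ℕ → E) (N : ℕ) (b : ℕ → E) : ℕ → E :=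
  fun m => if m < N then a m else b (m - N)

lemma IsInfPath.splice {a b : ℕ → E} {N : ℕ} (ha : IsInfPath o t a) (hb : IsInfPath o t b)
    (hab : o (a N) = o (b 0)) : IsInfPath o t (splice a N b) := by
  intro m
  simp only [CKGraph.splice]
  rcases lt_trichotomy (m + 1) N with hlt | heq | hgt
  · rw [if_pos (by omega), if_pos hlt]
    exact ha m
  · rw [if_pos (by omega), if_neg (by omega), ha m, heq, Nat.sub_self, hab]
  · rw [if_neg (by omega), if_neg (by omega), show m + 1 - N = m - N + 1 by omega]
    exact hb _

lemma origin_splice_zero {a b : ℕ → E} {N : ℕ} (hab : o (a N) = o (b 0)) :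
    o (splice a N b 0) = o (a 0) := by
  rcases N with _ | N
  · exact hab.symm
  · simp [splice]

lemma infEquiv_splice (a : ℕ → E) (N : ℕ) (b : ℕ → E) : InfEquiv (splice a N b) b :=
  ⟨N, 0, fun r => by simp [splice]⟩

lemma infinite_setOf_infEquiv_of_periodic {c l : ℕ → E} {L : ℕ} (hc : IsInfPath o t c)
    (hper : Periodic c L) (hL : 0 < L) (hl : IsInfPath o t l) (hcl : o (c 0) = o (l 0))
    (hexit : ∀ m, c m ≠ l 0) :
    {p : ℕ → E | IsInfPath o t p ∧ o (p 0) = o (l 0) ∧ InfEquiv p l}.Infinite := by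
  have hjoin : ∀ n, o (c (n * L)) = o (l 0) := fun n => by
    rw [← hcl, ← Nat.cast_id n, (hper.nat_mul n).eq]
  refine Set.infinite_of_injective_forall_mem (f := fun n => splice c (n * L) l) ?_
    fun n => ⟨hc.splice hl (hjoin n), (origin_splice_zero (hjoin n)).trans hcl,
      infEquiv_splice c _ l⟩
  refine Injective.of_lt_imp_ne fun n m hnm hsplice => hexit (n * L) ?_
  have hnL : n * L < m * L := Nat.mul_lt_mul_of_pos_right hnm hL
  simpa [splice, hnL] using (congrFun hsplice (n * L)).symm

end

theorem stmt0_general (o t : E → V) (hns : NoSinks o) (hM : CondM o t) :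
    ∀ p : List E, IsCircuit o t p → ∀ e : E, ¬ IsExit o t p e := by
  rintro p hp e ⟨he, hev⟩
  obtain ⟨c, hc, hc0, hper, hcp⟩ := hp.exists_periodic_isInfPath hev
  obtain ⟨l, hl, rfl⟩ := hns.exists_isInfPath_head (t := t) e
  exact infinite_setOf_infEquiv_of_periodic hc hper hp.length_pos hl hc0
    (fun m hm => he (hm ▸ hcp m)) (hM _ l hl)

/-- If a row-finite directed graph with no sinks satisfies
condition (M), then every circuit is terminal, i.e. no circuit admits an exit. -/
theorem stmt0 [Countable V] [Countable E] (o t : E → V)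
    (hrf : RowFinite o) (hns : NoSinks o) (hM : CondM o t) :
    ∀ p : List E, IsCircuit o t p → ∀ e : E, ¬ IsExit o t p e :=
  stmt0_general o t hns hM

end CKGraph
end

section
/- Let E be a row-finite directed graph with no sinks that satisfies condition (M), let γ ⊆ E^0 be a maximal tail, and let F = Graph(γ) be the induced subgraph. Then F has essentially one infinite tail: any two infinite paths of F are equivalent, i.e., F^∞/~ consists of a single equivalence class. -/
namespace CKGraph

variable {V E : Type*}

/-- Auxiliary: a finite path from `v` to `w` along edge list `l`. -/
def FPath (o t : E → V) : V → V → List E → Prop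
  | v, w, [] => v = w
  | v, w, e :: l => o e = v ∧ FPath o t (t e) w l

theorem FPath.append {o t : E → V} {v w u : V} {l m : List E}
    (h1 : FPath o t v w l) (h2 : FPath o t w u m) : FPath o t v u (l ++ m) := by
  induction l generalizing v with
  | nil => exact h1 ▸ h2
  | cons e l ih => exact ⟨h1.1, ih h1.2⟩

theorem reach_fpath {o t : E → V} {v w : V} (h : Reach o t v w) :
    ∃ l, FPath o t v w l := by
  induction h with
  | refl => exact ⟨[], rfl⟩
  | tail _ hbc ih =>
    obtain ⟨l, hl⟩ := ih
    obtain ⟨e, he1, he2⟩ := hbc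
    exact ⟨l ++ [e], hl.append ⟨he1, he2⟩⟩

theorem FPath.chain {o t : E → V} {v w : V} {l : List E} (h : FPath o t v w l) :
    ∀ k (h1 : k < l.length) (h2 : k + 1 < l.length),
      t (l[k]) = o (l[k+1]) := by
  induction l generalizing v with
  | nil => intro k h1 h2; simp at h1
  | cons e l ih =>
    intro k h1 h2
    cases k with
    | zero =>
      cases l with
      | nil => simp at h2
      | cons f l' => simpa using h.2.1.symm
    | succ k =>
      simpa using ih h.2 k (by simpa using h1) (by simpa using h2)

/-- concatenation of a finite path with an infinite one -/
def cat (l : List E) (p : ℕ → E) : ℕ → E := fun n =>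
  if h : n < l.length then l[n] else p (n - l.length)

theorem cat_lt {l : List E} {p : ℕ → E} {n : ℕ} (h : n < l.length) :
    cat l p n = l[n] := dif_pos h

theorem cat_add {l : List E} {p : ℕ → E} (r : ℕ) :
    cat l p (l.length + r) = p r := by
  have : ¬ l.length + r < l.length := by omega
  simp [cat, this]

theorem cat_nil {p : ℕ → E} : cat ([] : List E) p = p := by
  funext n; simp [cat]

theorem cat_cons_succ {e : E} {l : List E} {p : ℕ → E} (n : ℕ) :
    cat (e :: l) p (n + 1) = cat l p n := by
  by_cases h : n < l.length
  · rw [cat_lt (by simpa using Nat.succ_lt_succ h), cat_lt h]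
    simp
  · simp [cat, h, Nat.succ_lt_succ_iff]

theorem cat_cons_zero {e : E} {l : List E} {p : ℕ → E} :
    cat (e :: l) p 0 = e := by simp [cat]

theorem cat_zero_orig {o t : E → V} {v : V} {l : List E} {p : ℕ → E}
    (h : FPath o t v (o (p 0)) l) : o (cat l p 0) = v := by
  cases l with
  | nil => rw [cat_nil]; exact h.symm
  | cons e l' => rw [cat_cons_zero]; exact h.1

theorem isInfPath_cat {o t : E → V} {v : V} {l : List E} {p : ℕ → E}
    (h : FPath o t v (o (p 0)) l) (hp : IsInfPath o t p) :
    IsInfPath o t (cat l p) := by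
  induction l generalizing v with
  | nil => rw [cat_nil]; exact hp
  | cons e l' ih =>
    intro n
    cases n with
    | zero =>
      rw [cat_cons_zero, cat_cons_succ 0, cat_zero_orig h.2]
    | succ n =>
      rw [cat_cons_succ, cat_cons_succ]
      exact ih h.2 n

/-- the first `n` edges of an infinite path -/
def ptake (p : ℕ → E) (n : ℕ) : List E := List.ofFn fun i : Fin n => p i

theorem ptake_length {p : ℕ → E} (n : ℕ) : (ptake p n).length = n := by
  simp [ptake]

theorem ptake_getElem {p : ℕ → E} {n i : ℕ} (h : i < (ptake p n).length) :
    (ptake p n)[i] = p i := by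
  simp [ptake]

theorem fpath_ptake {o t : E → V} {p : ℕ → E} (hp : IsInfPath o t p) :
    ∀ n, FPath o t (o (p 0)) (o (p n)) (ptake p n) := by
  intro n
  induction n with
  | zero => exact rfl
  | succ n ih =>
    have : ptake p (n + 1) = ptake p n ++ [p n] := by
      simp only [ptake, List.ofFn_succ', Fin.coe_castSucc, Fin.val_last,
        List.concat_eq_append]
    rw [this]
    exact ih.append ⟨rfl, hp n⟩

theorem InfEquiv.symm' {p q : ℕ → E} (h : InfEquiv p q) : InfEquiv q p := by
  obtain ⟨j, k, h⟩ := h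
  exact ⟨k, j, fun r => (h r).symm⟩

theorem InfEquiv.trans' {p q s : ℕ → E} (h1 : InfEquiv p q) (h2 : InfEquiv q s) :
    InfEquiv p s := by
  obtain ⟨j, k, h1⟩ := h1
  obtain ⟨j', k', h2⟩ := h2
  refine ⟨j + j', k' + k, fun r => ?_⟩
  have e1 := h1 (j' + r)
  have e2 := h2 (k + r)
  rw [show j + (j' + r) = j + j' + r by omega] at e1
  rw [show j' + (k + r) = k + (j' + r) by omega, show k' + (k + r) = k' + k + r by omega] at e2
  rw [e1, ← e2]

/-- **Key pigeonhole lemma.** If the tail of `p` connects (by finite paths) to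
vertices of `lam` at every stage, then condition (M) forces `p ∼ lam`. -/
theorem lemL {o t : E → V} (hM : CondM o t) {p lam : ℕ → E}
    (hp : IsInfPath o t p) (hl : IsInfPath o t lam)
    (hcon : ∀ n, ∃ m δ, FPath o t (o (p (n + 1))) (o (lam m)) δ) :
    InfEquiv p lam := by
  classical
  set v := o (p 0) with hv
  have hS : {ρ : ℕ → E | IsInfPath o t ρ ∧ o (ρ 0) = v ∧ InfEquiv ρ lam}.Finite :=
    hM v lam hl
  choose m δ hδ using hcon
  set pre : ℕ → List E := fun n => ptake p (n + 1) ++ δ n with hpre_def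
  have hshift : ∀ n, IsInfPath o t (fun r => lam (m n + r)) := by
    intro n r
    exact hl (m n + r)
  have hpre : ∀ n, FPath o t v (o ((fun r => lam (m n + r)) 0)) (pre n) := by
    intro n
    have : (fun r => lam (m n + r)) 0 = lam (m n) := by simp
    rw [this]
    exact (fpath_ptake hp (n + 1)).append (hδ n)
  set ρ : ℕ → ℕ → E := fun n => cat (pre n) (fun r => lam (m n + r)) with hρ_def
  have hmem : ∀ n, ρ n ∈ {ρ : ℕ → E | IsInfPath o t ρ ∧ o (ρ 0) = v ∧ InfEquiv ρ lam} := by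
    intro n
    refine ⟨isInfPath_cat (hpre n) (hshift n), cat_zero_orig (hpre n), ?_⟩
    exact ⟨(pre n).length, m n, fun r => cat_add r⟩
  haveI := hS.to_subtype
  obtain ⟨ρ₀, hfib⟩ := Finite.exists_infinite_fiber
    (fun n => (⟨ρ n, hmem n⟩ : {ρ : ℕ → E | IsInfPath o t ρ ∧ o (ρ 0) = v ∧ InfEquiv ρ lam}))
  have hpr : ∀ i, p i = ρ₀.1 i := by
    intro i
    have hfib' : ((fun n => (⟨ρ n, hmem n⟩ :
        {ρ : ℕ → E | IsInfPath o t ρ ∧ o (ρ 0) = v ∧ InfEquiv ρ lam})) ⁻¹' {ρ₀}).Infinite :=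
      Set.infinite_coe_iff.mp hfib
    obtain ⟨n, hn, hlt⟩ := hfib'.exists_gt i
    have hval : ρ n = ρ₀.1 := congrArg Subtype.val (by simpa using hn)
    have hi : i < (pre n).length := by
      have : (pre n).length = (n + 1) + (δ n).length := by
        simp [hpre_def, ptake_length]
      omega
    have : ρ n i = p i := by
      rw [hρ_def]
      simp only []
      rw [cat_lt hi]
      have hi2 : i < (ptake p (n + 1)).length := by rw [ptake_length]; omega
      rw [List.getElem_append_left hi2]
      exact ptake_getElem hi2
    rw [← this, hval]
  have : p = ρ₀.1 := funext hpr
  rw [this]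
  exact ρ₀.2.2.2


/-- One construction step: from the current end vertex `w ∈ γ` and a target
vertex `a ∈ γ`, cofinality yields an extension segment ending at a vertex of `γ`,
one of whose vertices (`o e`) is reachable from `a`. -/
theorem step_ex {o t : E → V} {γ : Set V} (hγ : MaximalTail o t γ)
    {w a : V} (hw : w ∈ γ) (ha : a ∈ γ) :
    ∃ (ε : List E) (e : E), FPath o t w (o e) ε ∧ t e ∈ γ ∧
      ∃ δ, FPath o t a (o e) δ := by
  obtain ⟨-, hcof, hedge, -⟩ := hγ
  obtain ⟨z, hz, hwz, haz⟩ := hcof w hw a ha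
  obtain ⟨ε, hε⟩ := reach_fpath hwz
  obtain ⟨δ, hδ⟩ := reach_fpath haz
  obtain ⟨e, he, hte⟩ := hedge z hz
  subst he
  exact ⟨ε, e, hε, hte, δ, hδ⟩

/-- State of the construction: a finite path from `w0` ending at a vertex of `γ`. -/
structure BSt (o t : E → V) (γ : Set V) (w0 : V) where
  L : List E
  w : V
  hw : w ∈ γ
  hL : FPath o t w0 w L

/-- The recursive construction of a growing finite path that at step `n`
captures the target vertex `c n`. -/
noncomputable def bseq (o t : E → V) (γ : Set V) (hγ : MaximalTail o t γ)
    (c : ℕ → V) (hc : ∀ n, c n ∈ γ) (w0 : V) (hw0 : w0 ∈ γ) : ℕ → BSt o t γ w0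
  | 0 => ⟨[], w0, hw0, rfl⟩
  | n + 1 =>
    let s := bseq o t γ hγ c hc w0 hw0 n
    let h := step_ex hγ s.hw (hc n)
    let ε := h.choose
    let e := h.choose_spec.choose
    have hsp := h.choose_spec.choose_spec
    ⟨s.L ++ (ε ++ [e]), t e, hsp.2.1,
      s.hL.append (hsp.1.append ⟨rfl, rfl⟩)⟩

section Bseq

variable {o t : E → V} {γ : Set V} (hγ : MaximalTail o t γ)
  (c : ℕ → V) (hc : ∀ n, c n ∈ γ) (w0 : V) (hw0 : w0 ∈ γ)

theorem bseq_succ_L (n : ℕ) :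
    ∃ (ε : List E) (e : E),
      (bseq o t γ hγ c hc w0 hw0 (n + 1)).L
        = (bseq o t γ hγ c hc w0 hw0 n).L ++ (ε ++ [e]) ∧
      (∃ δ, FPath o t (c n) (o e) δ) := by
  refine ⟨_, _, rfl, (step_ex hγ (bseq o t γ hγ c hc w0 hw0 n).hw (hc n)).choose_spec.choose_spec.2.2⟩

theorem bseq_prefix : ∀ {a b : ℕ}, a ≤ b →
    (bseq o t γ hγ c hc w0 hw0 a).L <+: (bseq o t γ hγ c hc w0 hw0 b).L := by
  intro a b hab
  induction b with
  | zero => have : a = 0 := by omega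
            subst this; exact List.prefix_rfl
  | succ b ih =>
    rcases Nat.lt_or_ge a (b + 1) with h | h
    · obtain ⟨ε, e, hL, -⟩ := bseq_succ_L hγ c hc w0 hw0 b
      rw [hL]
      exact (ih (by omega)).trans (List.prefix_append _ _)
    · have : a = b + 1 := by omega
      subst this; exact List.prefix_rfl

theorem bseq_len : ∀ n, n ≤ (bseq o t γ hγ c hc w0 hw0 n).L.length := by
  intro n
  induction n with
  | zero => simp
  | succ n ih =>
    obtain ⟨ε, e, hL, -⟩ := bseq_succ_L hγ c hc w0 hw0 n
    rw [hL]
    simp only [List.length_append, List.length_cons]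
    omega

/-- The universal infinite path. -/
noncomputable def lamPath : ℕ → E := fun n =>
  (bseq o t γ hγ c hc w0 hw0 (n + 1)).L[n]'
    (lt_of_lt_of_le (Nat.lt_succ_self n) (bseq_len hγ c hc w0 hw0 (n + 1)))

theorem lamPath_eq (m n : ℕ) (h : n < (bseq o t γ hγ c hc w0 hw0 m).L.length) :
    lamPath hγ c hc w0 hw0 n = (bseq o t γ hγ c hc w0 hw0 m).L[n] := by
  rcases le_total (n + 1) m with hm | hm
  · exact (bseq_prefix hγ c hc w0 hw0 hm).getElem _
  · exact ((bseq_prefix hγ c hc w0 hw0 hm).getElem h).symm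

theorem lamPath_isInfPath : IsInfPath o t (lamPath hγ c hc w0 hw0) := by
  intro n
  have h2 : n + 1 < (bseq o t γ hγ c hc w0 hw0 (n + 2)).L.length :=
    lt_of_lt_of_le (by omega) (bseq_len hγ c hc w0 hw0 (n + 2))
  have h1 : n < (bseq o t γ hγ c hc w0 hw0 (n + 2)).L.length := by omega
  rw [lamPath_eq hγ c hc w0 hw0 (n + 2) n h1,
      lamPath_eq hγ c hc w0 hw0 (n + 2) (n + 1) h2]
  exact (bseq o t γ hγ c hc w0 hw0 (n + 2)).hL.chain n h1 h2

theorem lamPath_con (n : ℕ) :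
    ∃ m δ, FPath o t (c n) (o (lamPath hγ c hc w0 hw0 m)) δ := by
  obtain ⟨ε, e, hL, δ, hδ⟩ := bseq_succ_L hγ c hc w0 hw0 n
  set L0 := (bseq o t γ hγ c hc w0 hw0 n).L with hL0
  have hlen : L0.length + ε.length < (bseq o t γ hγ c hc w0 hw0 (n + 1)).L.length := by
    rw [hL]; simp
  have hget : (bseq o t γ hγ c hc w0 hw0 (n + 1)).L[L0.length + ε.length]'hlen = e := by
    simp only [hL]
    rw [List.getElem_append_right (by omega), List.getElem_append_right (by omega)]
    simp
  refine ⟨L0.length + ε.length, δ, ?_⟩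
  rw [lamPath_eq hγ c hc w0 hw0 (n + 1) _ hlen, hget]
  exact hδ

end Bseq

/-- Let `E` be row-finite with no sinks satisfying condition (M),
let `γ` be a maximal tail and `F = Graph(γ)`.  Then any two infinite paths of `F`
are tail-equivalent: `F^∞/∼` has a single class. -/
theorem stmt3 [Countable V] [Countable E] (o t : E → V)
    (hrf : RowFinite o) (hns : NoSinks o) (hM : CondM o t)
    (γ : Set V) (hγ : MaximalTail o t γ) :
    ∀ p q : ℕ → E, IsInfPath o t p → (∀ n : ℕ, p n ∈ edgesIn o t γ) →
      IsInfPath o t q → (∀ n : ℕ, q n ∈ edgesIn o t γ) → InfEquiv p q := by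
  intro p q hp hpγ hq hqγ
  classical
  set c : ℕ → V := fun n => if n % 2 = 0 then o (p (n / 2 + 1)) else o (q (n / 2 + 1))
    with hc_def
  have hc : ∀ n, c n ∈ γ := by
    intro n
    by_cases h : n % 2 = 0
    · simpa [hc_def, h] using (hpγ (n / 2 + 1)).1
    · simpa [hc_def, h] using (hqγ (n / 2 + 1)).1
  have hw0 : o (p 0) ∈ γ := (hpγ 0).1
  set lam := lamPath hγ c hc (o (p 0)) hw0 with hlam
  have hlinf : IsInfPath o t lam := lamPath_isInfPath hγ c hc (o (p 0)) hw0
  have hpcon : ∀ n, ∃ m δ, FPath o t (o (p (n + 1))) (o (lam m)) δ := by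
    intro n
    have hcn : c (2 * n) = o (p (n + 1)) := by
      have h1 : (2 * n) % 2 = 0 := by omega
      have h2 : (2 * n) / 2 = n := by omega
      simp [hc_def, h1, h2]
    have := lamPath_con hγ c hc (o (p 0)) hw0 (2 * n)
    rwa [hcn] at this
  have hqcon : ∀ n, ∃ m δ, FPath o t (o (q (n + 1))) (o (lam m)) δ := by
    intro n
    have hcn : c (2 * n + 1) = o (q (n + 1)) := by
      have h1 : ¬ (2 * n + 1) % 2 = 0 := by omega
      have h2 : (2 * n + 1) / 2 = n := by omega
      simp [hc_def, h1, h2]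
    have := lamPath_con hγ c hc (o (p 0)) hw0 (2 * n + 1)
    rwa [hcn] at this
  exact (lemL hM hp hlinf hpcon).trans' (lemL hM hq hlinf hqcon).symm'

end CKGraph
end

section
/- Let E be a row-finite directed graph, let λ = e_1e_2… be an infinite path in E with origin v_λ = o(λ), and suppose: (1) E has no circuits; (2) infinitely many infinite paths begin at v_λ and are equivalent to λ; (3) for every vertex w of λ with w ≠ v_λ, only finitely many infinite paths begin at w and are equivalent to λ; (4) every vertex of E is reachable from v_λ; (5) every vertex of E reaches some vertex of λ. Then E is not cofinal: there exists an infinite path μ in E, beginning at v_λ, such that the vertex t(e_1) (the terminus of the first edge of λ) does not reach any vertex of μ. -/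
/-!
Call a vertex `u` *rich* if infinitely many infinite paths from `u` are tail-equivalent to `λ`.
Prepending an edge is injective and preserves tail-equivalence, so every vertex reaching a rich
vertex is rich; conversely, by row-finiteness, a rich vertex has an out-edge to a rich vertex.
Starting from the rich vertex `v_λ` we can therefore walk forever through rich vertices, which
gives `μ`. As `E` has no loops, `t(e₁) ≠ v_λ`, so `t(e₁)` is not rich by (3) and cannot reach
any vertex of `μ`.
-/

namespace CKGraph

variable {V E : Type*}

variable (o t : E → V)

def equivPathsFrom (q : ℕ → E) (u : V) : Set (ℕ → E) :=
  {p | IsInfPath o t p ∧ o (p 0) = u ∧ InfEquiv p q}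

variable {o t}

lemma cons_mem_equivPathsFrom {q p : ℕ → E} {e : E} (hp : p ∈ equivPathsFrom o t q (t e)) :
    Stream'.cons e p ∈ equivPathsFrom o t q (o e) := by
  obtain ⟨hpath, hstart, j, k, hjk⟩ := hp
  refine ⟨?_, rfl, j + 1, k, fun r => ?_⟩
  · rintro (_ | n)
    exacts [hstart.symm, hpath n]
  · rw [Nat.add_right_comm]
    exact hjk r

lemma tail_mem_equivPathsFrom {q p : ℕ → E} {u : V} (hp : p ∈ equivPathsFrom o t q u) :
    Stream'.tail p ∈ equivPathsFrom o t q (t (p 0)) := by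
  obtain ⟨hpath, -, j, k, hjk⟩ := hp
  refine ⟨fun n => hpath (n + 1), (hpath 0).symm, j, k + 1, fun r => ?_⟩
  rw [add_right_comm k]
  exact hjk (r + 1)

lemma equivPathsFrom_origin_infinite {q : ℕ → E} {e : E}
    (h : (equivPathsFrom o t q (t e)).Infinite) : (equivPathsFrom o t q (o e)).Infinite :=
  (h.image (Stream'.cons_injective_right e).injOn).mono <| by
    rintro _ ⟨p, hp, rfl⟩
    exact cons_mem_equivPathsFrom hp

lemma Reach.equivPathsFrom_infinite {q : ℕ → E} {a b : V} (hab : Reach o t a b)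
    (hb : (equivPathsFrom o t q b).Infinite) : (equivPathsFrom o t q a).Infinite := by
  induction hab using Relation.ReflTransGen.head_induction_on with
  | refl => exact hb
  | head hstep _ ih =>
    obtain ⟨e, rfl, rfl⟩ := hstep
    exact equivPathsFrom_origin_infinite ih

lemma RowFinite.exists_edge_equivPathsFrom_infinite (hrf : RowFinite o) {q : ℕ → E} {u : V}
    (hu : (equivPathsFrom o t q u).Infinite) :
    ∃ e, o e = u ∧ (equivPathsFrom o t q (t e)).Infinite := by
  by_contra! hfin
  refine hu (((hrf u).biUnion fun e he => (hfin e he).image (Stream'.cons e)).subset ?_)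
  intro p hp
  refine Set.mem_biUnion (x := p 0) hp.2.1 ⟨Stream'.tail p, tail_mem_equivPathsFrom hp, ?_⟩
  exact Stream'.eta p

lemma exists_infPath_of_forall_exists_edge {P : V → Prop} (hP : ∀ u, P u → ∃ e, o e = u ∧ P (t e))
    {u : V} (hu : P u) : ∃ μ, IsInfPath o t μ ∧ o (μ 0) = u ∧ ∀ n, P (o (μ n)) := by
  choose f hfo hft using hP
  let next : {v // P v} → {v // P v} := fun v => ⟨t (f v.1 v.2), hft v.1 v.2⟩
  let vert : ℕ → {v // P v} := fun n => next^[n] ⟨u, hu⟩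
  refine ⟨fun n => f (vert n).1 (vert n).2, fun n => ?_, hfo u hu, fun n => ?_⟩
  · rw [hfo]
    exact congrArg Subtype.val (Function.iterate_succ_apply' next n _).symm
  · rw [hfo]
    exact (vert n).2

lemma isCircuit_singleton {e : E} (h : o e = t e) : IsCircuit o t [e] :=
  ⟨List.isChain_singleton e, List.cons_ne_nil e [], h⟩

theorem stmt5_general (o t : E → V) (hrf : RowFinite o)
    (l : ℕ → E) (hl : IsInfPath o t l)
    (h1 : ∀ p : List E, ¬ IsCircuit o t p)
    (h2 : {μ : ℕ → E | IsInfPath o t μ ∧ o (μ 0) = o (l 0) ∧ InfEquiv μ l}.Infinite)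
    (h3 : ∀ w ∈ InfPathVerts o t l, w ≠ o (l 0) →
      {μ : ℕ → E | IsInfPath o t μ ∧ o (μ 0) = w ∧ InfEquiv μ l}.Finite) :
    ∃ μ : ℕ → E, IsInfPath o t μ ∧ o (μ 0) = o (l 0) ∧
      ∀ w ∈ InfPathVerts o t μ, ¬ Reach o t (t (l 0)) w := by
  have hfin : (equivPathsFrom o t l (t (l 0))).Finite :=
    h3 _ ⟨1, (hl 0).symm⟩ fun hloop => h1 _ (isCircuit_singleton hloop.symm)
  obtain ⟨μ, hμ, hμ0, hμinf⟩ := exists_infPath_of_forall_exists_edge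
    (fun _ hu => hrf.exists_edge_equivPathsFrom_infinite hu) h2
  refine ⟨μ, hμ, hμ0, ?_⟩
  rintro _ ⟨n, rfl⟩ hreach
  exact hfin.not_infinite (hreach.equivPathsFrom_infinite (hμinf n))

/-- Under hypotheses (1)–(5) of Lemma 3.7, `E` is not cofinal:
there is an infinite path `μ` beginning at `v_λ = o(l 0)` such that `t(e₁)`,
the terminus of the first edge of `l`, reaches no vertex of `μ`. -/
theorem stmt5 [Countable V] [Countable E] (o t : E → V) (hrf : RowFinite o)
    (l : ℕ → E) (hl : IsInfPath o t l)
    (h1 : ∀ p : List E, ¬ IsCircuit o t p)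
    (h2 : {μ : ℕ → E | IsInfPath o t μ ∧ o (μ 0) = o (l 0) ∧ InfEquiv μ l}.Infinite)
    (h3 : ∀ w ∈ InfPathVerts o t l, w ≠ o (l 0) →
      {μ : ℕ → E | IsInfPath o t μ ∧ o (μ 0) = w ∧ InfEquiv μ l}.Finite)
    (h4 : ∀ w : V, Reach o t (o (l 0)) w)
    (h5 : ∀ v : V, ∃ w ∈ InfPathVerts o t l, Reach o t v w) :
    ∃ μ : ℕ → E, IsInfPath o t μ ∧ o (μ 0) = o (l 0) ∧
      ∀ w ∈ InfPathVerts o t μ, ¬ Reach o t (t (l 0)) w :=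
  stmt5_general o t hrf l hl h1 h2 h3

end CKGraph
end

section
/- Let E be a directed graph and let H = {v ∈ E^0 : for every λ ∈ E^∞ ∪ Λ*, only finitely many paths in E^∞ ∪ Λ* begin at v and are equivalent to λ}. Then H is a hereditary and saturated subset of E^0. -/
namespace CKGraph

variable {V E : Type*}

/-- A `Λ*`-path: a finite path `p` ending at the singular vertex `v` (for the
empty path, the path is the vertex `v` itself). -/
def IsLamStar (o t : E → V) (p : List E) (v : V) : Prop :=
  IsPath o t p ∧ (∀ h : p ≠ [], t (p.getLast h) = v) ∧ Singular o v

/-- The origin of a finite path recorded together with its terminus vertex. -/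
def finOrigin (o : E → V) (p : List E) (v : V) : V :=
  match p with
  | [] => v
  | e :: _ => o e

/-- Generalized paths: elements of `E^∞ ∪ Λ*`.  A finite path is recorded as a
list of edges together with its terminus vertex. -/
def IsGP (o t : E → V) : (List E × V) ⊕ (ℕ → E) → Prop
  | Sum.inl pv => IsLamStar o t pv.1 pv.2
  | Sum.inr q => IsInfPath o t q

/-- The origin of a generalized path. -/
def GPOrigin (o : E → V) : (List E × V) ⊕ (ℕ → E) → V
  | Sum.inl pv => finOrigin o pv.1 pv.2
  | Sum.inr q => o (q 0)

/-- Equivalence of generalized paths: two finite paths are equivalent iff they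
have the same terminus; two infinite paths are equivalent iff they share a tail;
a finite path is never equivalent to an infinite one. -/
def GPEquiv : (List E × V) ⊕ (ℕ → E) → (List E × V) ⊕ (ℕ → E) → Prop
  | Sum.inl pv, Sum.inl qw => pv.2 = qw.2
  | Sum.inr p, Sum.inr q => InfEquiv p q
  | _, _ => False

/-- The condition defining `H`: for every `lam ∈ E^∞ ∪ Λ*`, only finitely many
members of `E^∞ ∪ Λ*` begin at `v` and are equivalent to `lam`. -/
def GPCondAt (o t : E → V) (v : V) : Prop :=
  ∀ lam : (List E × V) ⊕ (ℕ → E), IsGP o t lam →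
    {μ : (List E × V) ⊕ (ℕ → E) |
      IsGP o t μ ∧ GPOrigin o μ = v ∧ GPEquiv μ lam}.Finite

/-!
Prepending an edge `e` maps the paths of `E^∞ ∪ Λ*` that start at `t e` and are equivalent
to `λ` injectively into those that start at `o e` and are equivalent to `λ`; this gives
heredity. Conversely, every such path starting at a non-singular vertex `v` has the form `e ν`
for one of the finitely many edges `e` leaving `v`, with `ν ~ λ` starting at `t e`; so the
paths at `v` form a finite union of finite sets, which gives saturation.
-/

abbrev GenPath (V E : Type*) := (List E × V) ⊕ Stream' E

def GenPath.cons (e : E) : GenPath V E → GenPath V E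
  | Sum.inl pv => Sum.inl (e :: pv.1, pv.2)
  | Sum.inr q => Sum.inr (Stream'.cons e q)

lemma GenPath.cons_injective (e : E) : Function.Injective (GenPath.cons (V := V) e) := by
  rintro (⟨p, v⟩ | p) (⟨q, w⟩ | q) h <;>
    simp_all [GenPath.cons, (Stream'.cons_injective_right e).eq_iff]

def pathsFromEquiv (o t : E → V) (v : V) (lam : GenPath V E) : Set (GenPath V E) :=
  {μ | IsGP o t μ ∧ GPOrigin o μ = v ∧ GPEquiv μ lam}

lemma isPath_singleton (o t : E → V) (e : E) : IsPath o t [e] := List.isChain_singleton e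

lemma isPath_cons_cons_iff (o t : E → V) (e f : E) (p : List E) :
    IsPath o t (e :: f :: p) ↔ t e = o f ∧ IsPath o t (f :: p) := List.isChain_cons_cons

lemma isLamStar_cons_iff (o t : E → V) (e : E) (p : List E) (v : V) :
    IsLamStar o t (e :: p) v ↔ IsLamStar o t p v ∧ finOrigin o p v = t e := by
  cases p with
  | nil =>
    simp only [IsLamStar, isPath_singleton, ne_eq, reduceCtorEq, not_false_eq_true,
      List.getLast_singleton, forall_const, finOrigin]
    exact ⟨fun ⟨_, hv, hs⟩ => ⟨⟨List.isChain_nil, fun h => absurd trivial h, hs⟩, hv.symm⟩,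
      fun ⟨⟨_, _, hs⟩, hv⟩ => ⟨trivial, hv.symm, hs⟩⟩
  | cons f p =>
    simp only [IsLamStar, isPath_cons_cons_iff, finOrigin, ne_eq, reduceCtorEq,
      not_false_eq_true, List.getLast_cons, forall_const]
    tauto

lemma isInfPath_cons_iff (o t : E → V) (e : E) (q : Stream' E) :
    IsInfPath o t (Stream'.cons e q) ↔ IsInfPath o t q ∧ o (q 0) = t e := by
  constructor
  · intro h
    exact ⟨fun n => h (n + 1), (h 0).symm⟩
  · rintro ⟨h, h0⟩ (_ | n)
    exacts [h0.symm, h n]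

lemma infEquiv_cons_iff (e : E) (p q : Stream' E) :
    InfEquiv (Stream'.cons e p) q ↔ InfEquiv p q := by
  constructor
  · rintro ⟨j, k, h⟩
    exact ⟨j, k + 1, fun r => by rw [Nat.add_right_comm]; exact h (r + 1)⟩
  · rintro ⟨j, k, h⟩
    exact ⟨j + 1, k, fun r => by rw [Nat.add_right_comm]; exact h r⟩

lemma isGP_cons_iff (o t : E → V) (e : E) (μ : GenPath V E) :
    IsGP o t (μ.cons e) ↔ IsGP o t μ ∧ GPOrigin o μ = t e := by
  rcases μ with ⟨p, v⟩ | q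
  exacts [isLamStar_cons_iff o t e p v, isInfPath_cons_iff o t e q]

lemma gpEquiv_cons_iff (e : E) (μ lam : GenPath V E) :
    GPEquiv (μ.cons e) lam ↔ GPEquiv μ lam := by
  rcases μ with ⟨p, v⟩ | q <;> rcases lam with ⟨p', v'⟩ | q'
  · rfl
  · rfl
  · rfl
  · exact infEquiv_cons_iff e q q'

lemma cons_mem_pathsFromEquiv_iff (o t : E → V) (e : E) (v : V) (μ lam : GenPath V E) :
    μ.cons e ∈ pathsFromEquiv o t v lam ↔ o e = v ∧ μ ∈ pathsFromEquiv o t (t e) lam := by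
  have horigin : GPOrigin o (μ.cons e) = o e := by rcases μ with ⟨_, _⟩ | _ <;> rfl
  show _ ∧ _ ∧ _ ↔ _ ∧ _ ∧ _ ∧ _
  rw [isGP_cons_iff, gpEquiv_cons_iff, horigin]
  tauto

/-- Only the empty path at a singular vertex is not of the form `e μ`. -/
lemma exists_eq_cons (o t : E → V) (μ : GenPath V E) (hμ : IsGP o t μ)
    (hv : ¬ Singular o (GPOrigin o μ)) : ∃ e ν, μ = GenPath.cons e ν := by
  rcases μ with ⟨_ | ⟨e, p⟩, v⟩ | q
  · exact absurd hμ.2.2 hv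
  · exact ⟨e, Sum.inl (p, v), rfl⟩
  · exact ⟨q 0, Sum.inr (Stream'.tail q), congrArg Sum.inr (Stream'.eta q).symm⟩

lemma image_cons_pathsFromEquiv_subset (o t : E → V) (e : E) (lam : GenPath V E) :
    GenPath.cons e '' pathsFromEquiv o t (t e) lam ⊆ pathsFromEquiv o t (o e) lam := by
  rintro _ ⟨μ, hμ, rfl⟩
  exact (cons_mem_pathsFromEquiv_iff o t e _ μ lam).2 ⟨rfl, hμ⟩

lemma pathsFromEquiv_subset_biUnion (o t : E → V) (v : V) (hv : ¬ Singular o v)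
    (lam : GenPath V E) :
    pathsFromEquiv o t v lam ⊆
      ⋃ e ∈ {e : E | o e = v}, GenPath.cons e '' pathsFromEquiv o t (t e) lam := by
  intro μ hμ
  obtain ⟨e, ν, rfl⟩ := exists_eq_cons o t μ hμ.1 (hμ.2.1 ▸ hv)
  obtain ⟨he, hν⟩ := (cons_mem_pathsFromEquiv_iff o t e v ν lam).1 hμ
  exact Set.mem_biUnion he ⟨ν, hν, rfl⟩

lemma hereditary_setOf_of_forall_edge (o t : E → V) {P : V → Prop}
    (h : ∀ e, P (o e) → P (t e)) : Hereditary o t {v | P v} := by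
  intro v hv w hvw
  induction hvw with
  | refl => exact hv
  | tail _ hstep ih =>
    obtain ⟨e, rfl, rfl⟩ := hstep
    exact h e ih

lemma GPCondAt.target {o t : E → V} {e : E} (h : GPCondAt o t (o e)) :
    GPCondAt o t (t e) := fun lam hlam =>
  Set.Finite.of_finite_image ((h lam hlam).subset (image_cons_pathsFromEquiv_subset o t e lam))
    (GenPath.cons_injective e).injOn

lemma GPCondAt.of_forall_target (o t : E → V) (v : V) (hv : ¬ Singular o v)
    (h : ∀ e, o e = v → GPCondAt o t (t e)) : GPCondAt o t v := by
  intro lam hlam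
  have hfin : {e : E | o e = v}.Finite := Set.not_infinite.1 fun hinf => hv (Or.inr hinf)
  exact (hfin.biUnion fun e he => (h e he lam hlam).image _).subset
    (pathsFromEquiv_subset_biUnion o t v hv lam)

theorem stmt6_general (o t : E → V) :
    Hereditary o t {v : V | GPCondAt o t v} ∧
    Saturated o t {v : V | GPCondAt o t v} :=
  ⟨hereditary_setOf_of_forall_edge o t fun _ => GPCondAt.target,
    fun v => GPCondAt.of_forall_target o t v⟩

/-- The set `H` of vertices `v` such that for every
`lam ∈ E^∞ ∪ Λ*` only finitely many members of `E^∞ ∪ Λ*` begin at `v` and are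
equivalent to `lam` is hereditary and saturated. -/
theorem stmt6 [Countable V] [Countable E] (o t : E → V) :
    Hereditary o t {v : V | GPCondAt o t v} ∧
    Saturated o t {v : V | GPCondAt o t v} :=
  stmt6_general o t

end CKGraph
end

section
/- Let E be a directed graph such that (1) every circuit in E is either terminal or transitory, and (2) for every infinite path λ in E, N_λ is finite. Then there exists a vertex v ∈ E^0 such that E(v) is either a terminal circuit or a tree; explicitly, either v lies on a terminal circuit α with {w ∈ E^0 : v ≥ w} = α^0, or for every vertex w with v ≥ w there is at most one directed path from v to w. -/
namespace CKGraph

variable {V E : Type*}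

/-- `PathFrom o t v w p`: `p` is a directed path from `v` to `w` (the empty path
counts as the trivial path from `v` to `v`). -/
def PathFrom (o t : E → V) (v w : V) (p : List E) : Prop :=
  IsPath o t p ∧
    ((p = [] ∧ v = w) ∨ ∃ h : p ≠ [], o (p.head h) = v ∧ t (p.getLast h) = w)

/-! If some circuit is terminal, any of its vertices works. Otherwise call a *fork* towards `y`
a vertex `u` with two distinct edges `a`, `b` both leading to `y`, where `a` never returns to
`u`. If every vertex reaches a circuit, that circuit is transitory and an exit together with the
circuit edge at the same vertex is a fork; if some `v₀` reaches no circuit and no vertex below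
`v₀` spans a tree, two distinct paths with common ends diverge at a fork. Either way forks can be
chained forever, and an infinite path through all of them has infinitely many vertices emitting
multiple edges returning to it, pairwise distinct because `a` never returns to `u`. -/
section Paths

variable {o t : E → V}

lemma isPath_iff_isChain {p : List E} : IsPath o t p ↔ p.IsChain (fun e f => t e = o f) :=
  Iff.rfl

@[simp]
lemma pathFrom_nil {x w : V} : PathFrom o t x w [] ↔ x = w := by
  simp [PathFrom, isPath_iff_isChain]

@[simp]
lemma pathFrom_cons {x w : V} {e : E} {p : List E} :
    PathFrom o t x w (e :: p) ↔ o e = x ∧ PathFrom o t (t e) w p := by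
  cases p with
  | nil => simp [PathFrom, isPath_iff_isChain]
  | cons f p =>
    simp only [PathFrom, isPath_iff_isChain, List.isChain_cons_cons, reduceCtorEq, false_and,
      false_or, ne_eq, not_false_eq_true, exists_true_left, List.head_cons,
      List.getLast_cons_cons]
    tauto

@[simp]
lemma mem_finPathVerts_cons {v : V} {e : E} {p : List E} :
    v ∈ FinPathVerts o t (e :: p) ↔ o e = v ∨ t e = v ∨ v ∈ FinPathVerts o t p := by
  simp [FinPathVerts, or_assoc]

lemma PathFrom.append {x w z : V} {p q : List E} (hp : PathFrom o t x w p)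
    (hq : PathFrom o t w z q) : PathFrom o t x z (p ++ q) := by
  induction p generalizing x with
  | nil => rwa [pathFrom_nil.mp hp]
  | cons e p ih =>
    obtain ⟨rfl, hp'⟩ := pathFrom_cons.mp hp
    exact pathFrom_cons.mpr ⟨rfl, ih hp'⟩

lemma PathFrom.reach {x w : V} {p : List E} (hp : PathFrom o t x w p) : Reach o t x w := by
  induction p generalizing x with
  | nil => rw [pathFrom_nil.mp hp]; exact .refl
  | cons e p ih =>
    obtain ⟨rfl, hp'⟩ := pathFrom_cons.mp hp
    exact .head ⟨e, rfl, rfl⟩ (ih hp')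

lemma Reach.exists_pathFrom {x w : V} (h : Reach o t x w) : ∃ p, PathFrom o t x w p := by
  induction h using Relation.ReflTransGen.head_induction_on with
  | refl => exact ⟨[], pathFrom_nil.mpr rfl⟩
  | head hstep _ ih =>
    obtain ⟨e, rfl, rfl⟩ := hstep
    obtain ⟨p, hp⟩ := ih
    exact ⟨e :: p, pathFrom_cons.mpr ⟨rfl, hp⟩⟩

lemma PathFrom.reach_of_mem {x w v : V} {p : List E} (hp : PathFrom o t x w p)
    (hv : v ∈ FinPathVerts o t p) : Reach o t x v ∧ Reach o t v w := by
  induction p generalizing x with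
  | nil => simp [FinPathVerts] at hv
  | cons e p ih =>
    obtain ⟨rfl, hp'⟩ := pathFrom_cons.mp hp
    rcases mem_finPathVerts_cons.mp hv with rfl | rfl | hv
    · exact ⟨.refl, (pathFrom_cons.mpr ⟨rfl, hp'⟩).reach⟩
    · exact ⟨.single ⟨e, rfl, rfl⟩, hp'.reach⟩
    · obtain ⟨h1, h2⟩ := ih hp' hv
      exact ⟨.head ⟨e, rfl, rfl⟩ h1, h2⟩

lemma PathFrom.eq_or_exists_origin_eq {x w v : V} {p : List E} (hp : PathFrom o t x w p)
    (hv : v ∈ FinPathVerts o t p) : v = w ∨ ∃ g ∈ p, o g = v := by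
  induction p generalizing x with
  | nil => simp [FinPathVerts] at hv
  | cons e p ih =>
    obtain ⟨rfl, hp'⟩ := pathFrom_cons.mp hp
    rcases mem_finPathVerts_cons.mp hv with rfl | rfl | hv
    · exact .inr ⟨e, by simp, rfl⟩
    · cases p with
      | nil => exact .inl (pathFrom_nil.mp hp')
      | cons f p => exact .inr ⟨f, by simp, (pathFrom_cons.mp hp').1⟩
    · exact (ih hp' hv).imp_right fun ⟨g, hg, hog⟩ => ⟨g, List.mem_cons_of_mem e hg, hog⟩

end Paths

section Circuits

variable {o t : E → V}

lemma PathFrom.isCircuit {x : V} {c : List E} (hc : PathFrom o t x x c) (hne : c ≠ []) :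
    IsCircuit o t c ∧ x ∈ FinPathVerts o t c := by
  obtain ⟨hpath, ⟨h, _⟩ | ⟨_, hhead, hlast⟩⟩ := hc
  · exact absurd h hne
  · exact ⟨⟨hpath, hne, hhead.trans hlast.symm⟩, ⟨c.head hne, List.head_mem hne, .inl hhead⟩⟩

lemma IsCircuit.exists_pathFrom {c : List E} (hc : IsCircuit o t c) :
    ∃ x, PathFrom o t x x c ∧ ∃ g ∈ c, o g = x := by
  obtain ⟨hpath, hne, hcyc⟩ := hc
  exact ⟨_, ⟨hpath, .inr ⟨hne, rfl, hcyc.symm⟩⟩, c.head hne, List.head_mem hne, rfl⟩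

lemma IsCircuit.reach {c : List E} (hc : IsCircuit o t c) {v w : V}
    (hv : v ∈ FinPathVerts o t c) (hw : w ∈ FinPathVerts o t c) : Reach o t v w := by
  obtain ⟨x, hx, -⟩ := hc.exists_pathFrom
  exact (hx.reach_of_mem hv).2.trans (hx.reach_of_mem hw).1

lemma IsCircuit.exists_origin_eq {c : List E} (hc : IsCircuit o t c) {v : V}
    (hv : v ∈ FinPathVerts o t c) : ∃ g ∈ c, o g = v := by
  obtain ⟨x, hx, hhead⟩ := hc.exists_pathFrom
  rcases hx.eq_or_exists_origin_eq hv with rfl | h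
  exacts [hhead, h]

lemma exists_isCircuit_of_reach {a : E} (h : Reach o t (t a) (o a)) :
    ∃ c, IsCircuit o t c ∧ o a ∈ FinPathVerts o t c := by
  obtain ⟨p, hp⟩ := h.exists_pathFrom
  exact ⟨a :: p, (pathFrom_cons.mpr ⟨rfl, hp⟩).isCircuit (List.cons_ne_nil a p)⟩

lemma TerminalCircuit.reach_iff {c : List E} (hc : TerminalCircuit o t c) {v w : V}
    (hv : v ∈ FinPathVerts o t c) : Reach o t v w ↔ w ∈ FinPathVerts o t c := by
  refine ⟨fun h => ?_, hc.1.reach hv⟩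
  induction h with
  | refl => exact hv
  | tail _ hstep ih =>
    obtain ⟨e, rfl, rfl⟩ := hstep
    by_contra hte
    exact hc.2 e ⟨fun he => hte ⟨e, he, .inr rfl⟩, ih⟩

end Circuits

section InfinitePaths

variable {o t : E → V}

lemma exists_isInfPath_through (a : ℕ → E) (h : ∀ n, Reach o t (t (a n)) (o (a (n + 1)))) :
    ∃ l : ℕ → E, IsInfPath o t l ∧ ∀ n, ∃ k, l k = a n := by
  choose p hp using fun n => (h n).exists_pathFrom
  set Φ : ℕ → List E := fun n => (List.range n).flatMap fun i => a i :: p i with hΦ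
  have hΦ_succ : ∀ n, Φ (n + 1) = Φ n ++ a n :: p n := by simp [hΦ, List.range_succ]
  have hpath : ∀ n, PathFrom o t (o (a 0)) (o (a n)) (Φ n) := by
    intro n
    induction n with
    | zero => simp [hΦ]
    | succ n ih => rw [hΦ_succ]; exact ih.append (pathFrom_cons.mpr ⟨rfl, hp n⟩)
  have hlen : ∀ n, n ≤ (Φ n).length := by
    intro n
    induction n with
    | zero => simp
    | succ n ih => rw [hΦ_succ, List.length_append, List.length_cons]; omega
  have hprefix : ∀ m n, m ≤ n → Φ m <+: Φ n := by
    intro m n hmn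
    induction n, hmn using Nat.le_induction with
    | base => exact List.prefix_refl _
    | succ n _ ih => exact hΦ_succ n ▸ ih.trans (List.prefix_append _ _)
  let l : ℕ → E := fun k => (Φ (k + 1))[k]'(hlen (k + 1))
  have hl : ∀ n k (hk : k < (Φ n).length), l k = (Φ n)[k] := by
    intro n k hk
    rcases le_total (k + 1) n with hkn | hnk
    · exact (hprefix _ _ hkn).getElem _
    · exact ((hprefix _ _ hnk).getElem hk).symm
  refine ⟨l, fun k => ?_, fun n => ?_⟩
  · have hk : k + 1 < (Φ (k + 2)).length := hlen (k + 2)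
    rw [hl (k + 2) k (by omega), hl (k + 2) (k + 1) hk]
    exact List.isChain_iff_getElem.mp (hpath (k + 2)).1 k hk
  · obtain ⟨k, hk, hka⟩ := List.mem_iff_getElem.mp (show a n ∈ Φ (n + 1) by simp [hΦ_succ])
    exact ⟨k, (hl _ k hk).trans hka⟩

end InfinitePaths

section Forks

variable {o t : E → V}

structure IsFork (o t : E → V) (x y : V) (a b : E) : Prop where
  ne : a ≠ b
  origin_eq : o a = o b
  reach_origin : Reach o t x (o a)
  reach_left : Reach o t (t a) y
  reach_right : Reach o t (t b) y
  not_return : ¬ Reach o t (t a) (o a)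

lemma IsFork.reach {x y : V} {a b : E} (h : IsFork o t x y a b) : Reach o t x y :=
  h.reach_origin.trans (.head ⟨a, rfl, rfl⟩ h.reach_left)

lemma IsFork.of_reach {x x' y : V} {a b : E} (hx : Reach o t x x') (h : IsFork o t x' y a b) :
    IsFork o t x y a b :=
  { h with reach_origin := hx.trans h.reach_origin }

lemma returnVerts_infinite_of_forks (a b : ℕ → E) (hab : ∀ n, a n ≠ b n)
    (hob : ∀ n, o (a n) = o (b n)) (ha : ∀ n, Reach o t (t (a n)) (o (a (n + 1))))
    (hb : ∀ n, Reach o t (t (b n)) (o (a (n + 1))))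
    (hret : ∀ n, ¬ Reach o t (t (a n)) (o (a n))) :
    ∃ l : ℕ → E, IsInfPath o t l ∧ (ReturnVerts o t l).Infinite := by
  obtain ⟨l, hl, hmem⟩ := exists_isInfPath_through a ha
  have hvert : ∀ n, o (a n) ∈ InfPathVerts o t l := fun n => (hmem n).imp fun k hk => by rw [hk]
  have hreach : ∀ m n, m < n → Reach o t (t (a m)) (o (a n)) := by
    intro m n hmn
    induction n, hmn using Nat.le_induction with
    | base => exact ha m
    | succ n _ ih => exact ih.trans (.head ⟨a n, rfl, rfl⟩ (ha n))
  have hinj : Function.Injective fun n => o (a n) := by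
    intro m n (hmn : o (a m) = o (a n))
    by_contra hne
    rcases Nat.lt_or_gt_of_ne hne with h | h
    · exact hret m (hmn ▸ hreach m n h)
    · exact hret n (hmn ▸ hreach n m h)
  refine ⟨l, hl, Set.infinite_of_injective_forall_mem hinj fun n => ?_⟩
  exact ⟨hvert n, a n, b n, hab n, rfl, (hob n).symm, ⟨_, hvert (n + 1), ha n⟩,
    ⟨_, hvert (n + 1), hb n⟩⟩

lemma exists_isInfPath_returnVerts_infinite (v₀ : V)
    (h : ∀ x, Reach o t v₀ x → ∃ y a b, IsFork o t x y a b) :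
    ∃ l : ℕ → E, IsInfPath o t l ∧ (ReturnVerts o t l).Infinite := by
  let r : V → V → Prop := fun y x => Reach o t v₀ x ∧ ∃ a b, IsFork o t x y a b
  have hacc : ∀ x, Acc r x → ¬ Reach o t v₀ x := by
    intro x hx
    induction hx with
    | intro x _ ih =>
      intro hv
      obtain ⟨y, a, b, hf⟩ := h x hv
      exact ih y ⟨hv, a, b, hf⟩ (hv.trans hf.reach)
  obtain ⟨X, -, hX⟩ := not_acc_iff_exists_descending_chain.mp fun hv => hacc v₀ hv .refl
  choose a b hf using fun n => (hX n).2
  exact returnVerts_infinite_of_forks a b (fun n => (hf n).ne) (fun n => (hf n).origin_eq)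
    (fun n => (hf n).reach_left.trans (hf (n + 1)).reach_origin)
    (fun n => (hf n).reach_right.trans (hf (n + 1)).reach_origin) (fun n => (hf n).not_return)

lemma TransitoryCircuit.exists_fork {c : List E} (hc : TransitoryCircuit o t c) {z : V}
    (hz : z ∈ FinPathVerts o t c) : ∃ y a b, IsFork o t z y a b := by
  obtain ⟨hcirc, ⟨e, he⟩, hnoret⟩ := hc
  obtain ⟨g, hg, hog⟩ := hcirc.exists_origin_eq he.2
  exact ⟨t e, e, g, fun h => he.1 (h ▸ hg), hog.symm, hcirc.reach hz he.2, .refl,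
    (hcirc.reach ⟨g, hg, .inr rfl⟩ he.2).tail ⟨e, rfl, rfl⟩, hnoret e he _ he.2⟩

-- Where `p` and `q` diverge their edges form a fork; if one is a prefix of the other, the rest
-- is a circuit.
lemma exists_fork_of_pathFrom_ne {x w : V} {p q : List E} (hp : PathFrom o t x w p)
    (hq : PathFrom o t x w q) (hpq : p ≠ q)
    (hnc : ∀ c z, IsCircuit o t c → z ∈ FinPathVerts o t c → ¬ Reach o t x z) :
    ∃ a b, IsFork o t x w a b := by
  induction p generalizing x q with
  | nil =>
    cases pathFrom_nil.mp hp
    obtain ⟨hc, hx⟩ := hq.isCircuit (Ne.symm hpq)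
    exact (hnc q _ hc hx .refl).elim
  | cons e p ih =>
    cases q with
    | nil =>
      cases pathFrom_nil.mp hq
      obtain ⟨hc, hx⟩ := hp.isCircuit hpq
      exact (hnc _ _ hc hx .refl).elim
    | cons f q =>
      obtain ⟨rfl, hp'⟩ := pathFrom_cons.mp hp
      obtain ⟨hfe, hq'⟩ := pathFrom_cons.mp hq
      by_cases hef : e = f
      · subst hef
        have hstep : Reach o t (o e) (t e) := .single ⟨e, rfl, rfl⟩
        obtain ⟨a, b, hf⟩ := ih hp' hq' (fun h => hpq (h ▸ rfl))
          (fun c z hc hz h => hnc c z hc hz (hstep.trans h))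
        exact ⟨a, b, hf.of_reach hstep⟩
      · refine ⟨e, f, hef, hfe.symm, .refl, hp'.reach, hq'.reach, fun h => ?_⟩
        obtain ⟨c, hc, he⟩ := exists_isCircuit_of_reach h
        exact hnc c _ hc he .refl

end Forks

theorem stmt7_general [Nonempty V] (o t : E → V)
    (h1 : ∀ p : List E, IsCircuit o t p →
      TerminalCircuit o t p ∨ TransitoryCircuit o t p)
    (h2 : ∀ l : ℕ → E, IsInfPath o t l → (ReturnVerts o t l).Finite) :
    ∃ v : V,
      (∃ α : List E, TerminalCircuit o t α ∧ v ∈ FinPathVerts o t α ∧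
        {w : V | Reach o t v w} = FinPathVerts o t α) ∨
      (∀ w : V, Reach o t v w →
        ∀ p q : List E, PathFrom o t v w p → PathFrom o t v w q → p = q) := by
  by_cases hterm : ∃ c, TerminalCircuit o t c
  · obtain ⟨c, hc⟩ := hterm
    obtain ⟨v, -, g, hg, rfl⟩ := hc.1.exists_pathFrom
    have hv : o g ∈ FinPathVerts o t c := ⟨g, hg, .inl rfl⟩
    exact ⟨o g, .inl ⟨c, hc, hv, Set.ext fun w => hc.reach_iff hv⟩⟩
  push Not at hterm
  have no_forks : ∀ v₀ : V, ¬ ∀ x, Reach o t v₀ x → ∃ y a b, IsFork o t x y a b :=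
    fun v₀ h => by
      obtain ⟨l, hl, hinf⟩ := exists_isInfPath_returnVerts_infinite v₀ h
      exact hinf (h2 l hl)
  by_cases hall : ∀ x, ∃ c z, IsCircuit o t c ∧ z ∈ FinPathVerts o t c ∧ Reach o t x z
  · refine (no_forks (Classical.arbitrary V) fun x _ => ?_).elim
    obtain ⟨c, z, hc, hz, hxz⟩ := hall x
    obtain ⟨y, a, b, hf⟩ := ((h1 c hc).resolve_left (hterm c)).exists_fork hz
    exact ⟨y, a, b, hf.of_reach hxz⟩
  push Not at hall
  obtain ⟨v₀, hv₀⟩ := hall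
  by_contra hcon
  refine no_forks v₀ fun x hx => ?_
  have htree : ¬ ∀ w, Reach o t x w → ∀ p q, PathFrom o t x w p → PathFrom o t x w q → p = q :=
    fun h => hcon ⟨x, .inr h⟩
  push Not at htree
  obtain ⟨w, -, p, q, hp, hq, hpq⟩ := htree
  exact ⟨w, exists_fork_of_pathFrom_ne hp hq hpq fun c z hc hz hxz => hv₀ c z hc hz (hx.trans hxz)⟩

/-- If every circuit of `E` is terminal or transitory and every
infinite path `l` has `N_l` finite, then some vertex `v` has `E(v)` equal to a
terminal circuit or a tree. -/
theorem stmt7 [Countable V] [Countable E] [Nonempty V] (o t : E → V)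
    (h1 : ∀ p : List E, IsCircuit o t p →
      TerminalCircuit o t p ∨ TransitoryCircuit o t p)
    (h2 : ∀ l : ℕ → E, IsInfPath o t l → (ReturnVerts o t l).Finite) :
    ∃ v : V,
      (∃ α : List E, TerminalCircuit o t α ∧ v ∈ FinPathVerts o t α ∧
        {w : V | Reach o t v w} = FinPathVerts o t α) ∨
      (∀ w : V, Reach o t v w →
        ∀ p q : List E, PathFrom o t v w p → PathFrom o t v w q → p = q) :=
  stmt7_general o t h1 h2

end CKGraph
end

section
/- Let E be a directed graph and let λ, γ be infinite paths in E with λ = pγ for some finite path p (γ is obtained from λ by deleting the initial segment p). Then N_γ ≤ N_λ ≤ N_γ + |p^0|, where |p^0| is the number of distinct vertices of p. In particular, N_λ is finite if and only if N_γ is finite. -/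
namespace CKGraph

variable {V E : Type*}

/-- The concatenation `p ⬝ g` of a finite path `p` with an infinite path `g`. -/
def concatPath (p : List E) (g : ℕ → E) : ℕ → E :=
  fun n => if h : n < p.length then p[n]'h else g (n - p.length)

lemma reach_along (o t : E → V) (l : ℕ → E) (hl : IsInfPath o t l) (m k : ℕ) :
    Reach o t (o (l m)) (o (l (m + k))) := by
  induction k with
  | zero => exact Relation.ReflTransGen.refl
  | succ k ih => exact ih.tail ⟨l (m + k), rfl, hl (m + k)⟩

lemma finPathVerts_finite (o t : E → V) (p : List E) :
    (FinPathVerts o t p).Finite := by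
  apply Set.Finite.subset ((p.finite_toSet.image o).union (p.finite_toSet.image t))
  rintro v ⟨e, he, h | h⟩
  · exact Or.inl ⟨e, he, h⟩
  · exact Or.inr ⟨e, he, h⟩

/-- If `l = p ⬝ g` then `N_g ≤ N_l ≤ N_g + |p⁰|`; in particular
`N_l` is finite iff `N_g` is finite. -/
theorem stmt8 [Countable V] [Countable E] (o t : E → V)
    (p : List E) (g l : ℕ → E)
    (hp : IsPath o t p) (hg : IsInfPath o t g) (hlinf : IsInfPath o t l)
    (hjoin : ∀ h : p ≠ [], t (p.getLast h) = o (g 0))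
    (hl : l = concatPath p g) :
    (ReturnVerts o t g).encard ≤ (ReturnVerts o t l).encard ∧
    (ReturnVerts o t l).encard ≤
      (ReturnVerts o t g).encard + (FinPathVerts o t p).encard ∧
    ((ReturnVerts o t l).Finite ↔ (ReturnVerts o t g).Finite) := by
  have hLg : ∀ n, p.length ≤ n → l n = g (n - p.length) := by
    intro n hn
    rw [hl]
    exact dif_neg (by omega)
  -- vertices of g are vertices of l
  have hgl : InfPathVerts o t g ⊆ InfPathVerts o t l := by
    rintro v ⟨k, hk⟩
    refine ⟨p.length + k, ?_⟩
    rw [hLg (p.length + k) (by omega)]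
    simpa using hk
  -- from any vertex of l we can reach a vertex of g
  have hreachg : ∀ w ∈ InfPathVerts o t l, ∃ w' ∈ InfPathVerts o t g,
      Reach o t w w' := by
    rintro w ⟨m, hm⟩
    refine ⟨o (g m), ⟨m, rfl⟩, ?_⟩
    have := reach_along o t l hlinf m p.length
    rw [hLg (m + p.length) (by omega)] at this
    simp only [Nat.add_sub_cancel] at this
    rwa [hm] at this
  have h1 : ReturnVerts o t g ⊆ ReturnVerts o t l := by
    rintro v ⟨hv, e, f, hef, he, hf, ⟨w, hw, hrw⟩, ⟨w', hw', hrw'⟩⟩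
    exact ⟨hgl hv, e, f, hef, he, hf, ⟨w, hgl hw, hrw⟩, ⟨w', hgl hw', hrw'⟩⟩
  have h2 : ReturnVerts o t l ⊆ ReturnVerts o t g ∪ FinPathVerts o t p := by
    rintro v ⟨⟨n, hn⟩, e, f, hef, he, hf, ⟨w, hw, hrw⟩, ⟨w', hw', hrw'⟩⟩
    by_cases hlen : n < p.length
    · right
      refine ⟨p[n], List.getElem_mem hlen, Or.inl ?_⟩
      rw [← hn, hl, concatPath, dif_pos hlen]
    · left
      obtain ⟨u, hu, hru⟩ := hreachg w hw
      obtain ⟨u', hu', hru'⟩ := hreachg w' hw'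
      refine ⟨⟨n - p.length, ?_⟩, e, f, hef, he, hf,
        ⟨u, hu, hrw.trans hru⟩, ⟨u', hu', hrw'.trans hru'⟩⟩
      rw [← hLg n (by omega)]; exact hn
  have hpfin := finPathVerts_finite o t p
  refine ⟨Set.encard_mono h1, (Set.encard_mono h2).trans (Set.encard_union_le _ _),
    ⟨fun h => h.subset h1, fun h => (h.union hpfin).subset h2⟩⟩

end CKGraph
end

section
/- Let E be a directed graph and let λ be an infinite path in E such that only finitely many infinite paths begin at o(λ) and are equivalent to λ. Then there exists a vertex w of λ such that exactly one infinite path begins at w and is equivalent to λ (namely the tail of λ starting at w). -/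
namespace CKGraph

variable {V E : Type*}

/-- If only finitely many infinite paths begin at `o(l 0)` and
are equivalent to `l`, then some vertex `o(l n)` of `l` has exactly one infinite
path beginning there and equivalent to `l`, namely the tail of `l` at `n`. -/
theorem stmt11 [Countable V] [Countable E] (o t : E → V) (l : ℕ → E)
    (hl : IsInfPath o t l)
    (hfin : {μ : ℕ → E | IsInfPath o t μ ∧ o (μ 0) = o (l 0) ∧ InfEquiv μ l}.Finite) :
    ∃ n : ℕ,
      {μ : ℕ → E | IsInfPath o t μ ∧ o (μ 0) = o (l n) ∧ InfEquiv μ l}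
        = {fun r => l (n + r)} := by
  classical
  set S := {μ : ℕ → E | IsInfPath o t μ ∧ o (μ 0) = o (l 0) ∧ InfEquiv μ l} with hS
  -- find n such that any ν ∈ S agreeing with l on the first n edges equals l
  obtain ⟨n, hn⟩ : ∃ n : ℕ, ∀ ν ∈ S, (∀ r < n, ν r = l r) → ν = l := by
    set f : (ℕ → E) → ℕ := fun ν => if h : ∃ r, ν r ≠ l r then Nat.find h else 0 with hf
    have hD : {ν ∈ S | ν ≠ l}.Finite := hfin.subset (Set.sep_subset _ _)
    obtain ⟨B, hB⟩ := (hD.image f).bddAbove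
    refine ⟨B + 1, fun ν hν hag => ?_⟩
    by_contra hne
    have hex : ∃ r, ν r ≠ l r := by
      by_contra hc; push_neg at hc; exact hne (funext hc)
    have hle : f ν ≤ B := hB ⟨ν, ⟨hν, hne⟩, rfl⟩
    have hspec : ν (f ν) ≠ l (f ν) := by
      simp only [hf, dif_pos hex]; exact Nat.find_spec hex
    exact hspec (hag _ (by omega))
  refine ⟨n, ?_⟩
  ext μ
  simp only [Set.mem_setOf_eq, Set.mem_singleton_iff]
  constructor
  · rintro ⟨hμpath, hμo, j, k, hjk⟩
    set ν : ℕ → E := fun r => if r < n then l r else μ (r - n) with hνdef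
    have hν0 : ∀ r < n, ν r = l r := fun r hr => if_pos hr
    have hνtail : ∀ r, ν (n + r) = μ r := by
      intro r; simp only [hνdef]; rw [if_neg (by omega)]
      congr 1; omega
    have hνS : ν ∈ S := by
      refine ⟨?_, ?_, ⟨n + j, k, fun r => ?_⟩⟩
      · intro r
        rcases lt_trichotomy (r + 1) n with h | h | h
        · rw [hν0 r (by omega), hν0 (r + 1) h]; exact hl r
        · rw [hν0 r (by omega)]
          have : ν (r + 1) = μ 0 := by
            have := hνtail 0; rwa [Nat.add_zero, ← h] at this
          rw [this, hμo, ← h]; exact hl r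
        · have h1 : ν r = μ (r - n) := by
            have := hνtail (r - n); rwa [Nat.add_sub_cancel' (by omega)] at this
          have h2 : ν (r + 1) = μ (r - n + 1) := by
            have := hνtail (r - n + 1)
            rwa [show n + (r - n + 1) = r + 1 by omega] at this
          rw [h1, h2]; exact hμpath (r - n)
      · rcases Nat.eq_zero_or_pos n with h | h
        · subst h
          have := hνtail 0
          simp only [Nat.zero_add] at this
          rw [this, hμo]
        · rw [hν0 0 h]
      · rw [show n + j + r = n + (j + r) by omega, hνtail]; exact hjk r
    have hνl : ν = l := hn ν hνS hν0
    funext r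
    rw [← hνtail r, hνl]
  · rintro rfl
    refine ⟨fun r => ?_, rfl, ⟨0, n, fun r => by simp [Nat.add_assoc]⟩⟩
    have := hl (n + r)
    rwa [show n + r + 1 = n + (r + 1) by omega] at this

end CKGraph
end
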